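/- arXiv:2401.05325 — 9 statements merged into one kernel-verified Lean document; each statement's English description precedes it below -/
import Mathlib

section
/- Let A be a type and let R, S, T be equivalence relations on A such that R ⊓ S ≤ T and such that the distributivity instance R ⊓ (S ⊔ T) = (R ⊓ S) ⊔ (R ⊓ T) holds, where ⊔ denotes joins in the lattice of equivalence relations on A. Then R ⊓ (S ∘ T ∘ S) ≤ T. (Instance form of: every regular equivalence distributive category satisfies the trapezoid lemma.) -/
namespace Jonsson

variable {α : Type*}

/-- Alternating composite `(U, V)_m`: `U ∘ V ∘ U ∘ ⋯` with `m` factors,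
alternating starting from `U`. (The value at `m = 0` is the equality relation.) -/
def altComp : (α → α → Prop) → (α → α → Prop) → ℕ → α → α → Prop
  | _, _, 0 => Eq
  | U, _, 1 => U
  | U, V, n + 2 => Relation.Comp U (altComp V U (n + 1))

/-- The join of two relations in the lattice of equivalence relations on `α`:
the smallest equivalence relation containing both. -/
def eqvJoin (U V : α → α → Prop) : α → α → Prop :=
  Relation.EqvGen (fun x y => U x y ∨ V x y)

end Jonsson

open Jonsson Relation

/-- Instance form of: every regular equivalence distributive category satisfies
the trapezoid lemma. -/
theorem distributive_implies_trapezoid {A : Type*} (R S T : A → A → Prop)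
    (hR : Equivalence R) (hS : Equivalence S) (hT : Equivalence T)
    (hRS : R ⊓ S ≤ T)
    (hdist : R ⊓ eqvJoin S T = eqvJoin (R ⊓ S) (R ⊓ T)) :
    R ⊓ Relation.Comp S (Relation.Comp T S) ≤ T := by
  rintro x z ⟨hr, y, hxy, w, hyw, hwz⟩
  have hmem : eqvJoin S T x z := by
    refine Relation.EqvGen.trans x y z (Relation.EqvGen.rel x y (Or.inl hxy)) ?_
    exact Relation.EqvGen.trans y w z (Relation.EqvGen.rel y w (Or.inr hyw))
      (Relation.EqvGen.rel w z (Or.inl hwz))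
  have h2 : eqvJoin (R ⊓ S) (R ⊓ T) x z := by
    rw [← hdist]; exact ⟨hr, hmem⟩
  have key : ∀ a b : A, eqvJoin (R ⊓ S) (R ⊓ T) a b → T a b := by
    intro a b h
    induction h with
    | rel a b h =>
      rcases h with h | h
      · exact hRS a b h
      · exact h.2
    | refl a => exact hT.refl a
    | symm a b _ ih => exact hT.symm ih
    | trans a b c _ _ ih1 ih2 => exact hT.trans ih1 ih2
  exact key x z h2
end

section
/- Let A be a type and let R, S, T be equivalence relations on A such that S ∘ T ≤ R ∘ S, R ⊓ S ≤ T, and the trapezoid instance R ⊓ (S ∘ T ∘ S) ≤ T holds. Then T permutes with S, that is, S ∘ T = T ∘ S. (Instance form of: in a regular category satisfying the trapezoid lemma, if S ∘ T ≤ R ∘ S and R ⊓ S ≤ T then T permutes with S.) -/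
open Jonsson Relation

/-- Instance form of: in a regular category satisfying the trapezoid lemma,
if `S ∘ T ≤ R ∘ S` and `R ⊓ S ≤ T` then `T` permutes with `S`. -/
theorem trapezoid_implies_permutes {A : Type*} (R S T : A → A → Prop)
    (hR : Equivalence R) (hS : Equivalence S) (hT : Equivalence T)
    (h1 : Relation.Comp S T ≤ Relation.Comp R S)
    (h2 : R ⊓ S ≤ T)
    (h3 : R ⊓ Relation.Comp S (Relation.Comp T S) ≤ T) :
    Relation.Comp S T = Relation.Comp T S := by
  have key : Relation.Comp S T ≤ Relation.Comp T S := by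
    rintro x z ⟨y, hxy, hyz⟩
    obtain ⟨w, hxw, hwz⟩ := h1 x z ⟨y, hxy, hyz⟩
    refine ⟨w, ?_, hwz⟩
    exact h3 x w ⟨hxw, y, hxy, z, hyz, hS.symm hwz⟩
  ext x z
  constructor
  · exact key x z
  · rintro ⟨y, hxy, hyz⟩
    obtain ⟨w, hzw, hwx⟩ := key z x ⟨y, hS.symm hyz, hT.symm hxy⟩
    exact ⟨w, hS.symm hwx, hT.symm hzw⟩
end

section
/- Let X and Y be types, let P₁ and P₂ be the kernel relations of the first and second projections on X × Y, and let E be an equivalence relation on X × Y such that the trapezoid instance P₁ ⊓ (P₂ ∘ E ∘ P₂) ≤ E holds. Then E ∘ P₂ = P₂ ∘ E. (Instance form of: a regular category satisfying the trapezoid lemma is factor permutable.) -/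
open Jonsson Relation

/-- Instance form of: a regular category satisfying the trapezoid lemma is
factor permutable.  Here `P₁`, `P₂` are the kernel relations of the two
product projections on `X × Y`. -/
theorem trapezoid_implies_factor_permutable {X Y : Type*}
    (E : X × Y → X × Y → Prop) (hE : Equivalence E)
    (ht : (fun p q : X × Y => p.1 = q.1) ⊓
        Relation.Comp (fun p q : X × Y => p.2 = q.2)
          (Relation.Comp E (fun p q : X × Y => p.2 = q.2)) ≤ E) :
    Relation.Comp E (fun p q : X × Y => p.2 = q.2) =
      Relation.Comp (fun p q : X × Y => p.2 = q.2) E := by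
  funext x z
  apply propext
  constructor
  · rintro ⟨y, hxy, h2⟩
    refine ⟨(z.1, x.2), rfl, ?_⟩
    have hz : z = (z.1, y.2) := by rw [h2]
    rw [hz]
    exact ht (z.1, x.2) (z.1, y.2) ⟨rfl, x, rfl, y, hxy, rfl⟩
  · rintro ⟨w, h2, hwz⟩
    refine ⟨(x.1, z.2), ?_, rfl⟩
    have hx : x = (x.1, w.2) := by rw [← h2]
    rw [hx]
    exact ht (x.1, w.2) (x.1, z.2) ⟨rfl, w, rfl, z, hwz, rfl⟩
end

section
/- Let A be a type, k ≥ 1 a natural number, and R, S, T equivalence relations on A. Suppose: (base) R ⊓ (S ∘ T) ≤ (R ⊓ S, R ⊓ T)_{k+1}; and for every j ≥ 2: if j is odd then R ⊓ ((S,T)_j ∘ T) ≤ ((R ⊓ (S,T)_j) ∘ (R ⊓ (S,T)_j), (R ⊓ T) ∘ (R ⊓ T))_{k+1}, and if j is even then R ⊓ ((S,T)_j ∘ S) ≤ ((R ⊓ (T,S)_j) ∘ (R ⊓ (S,T)_j), (R ⊓ S) ∘ (R ⊓ S))_{k+1}. Then for every j ≥ 1, R ⊓ (S,T)_j ≤ (R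 ⊓ S) ⊔ (R ⊓ T), where ⊔ is the join in the lattice of equivalence relations on A. (Instance form of: in an n-permutable Jónsson category, R ∧ (S,T)_j ≤ (R ∧ S) ∨ (R ∧ T) for all j ≥ 1.) -/
open Jonsson Relation

/-- Appending the last factor: `(U,V)_{m+2} = (U,V)_{m+1} ∘ W` where `W` alternates. -/
lemma altStep {α : Type*} : ∀ (m : ℕ) (U V : α → α → Prop),
    altComp U V (m + 2) =
      Relation.Comp (altComp U V (m + 1)) (if m % 2 = 0 then V else U) := by
  intro m
  induction m using Nat.strong_induction_on with
  | _ m ih =>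
    match m with
    | 0 => intro U V; rfl
    | n + 1 =>
      intro U V
      have h := ih n (by omega) V U
      show Relation.Comp U (altComp V U (n + 2)) = _
      rw [h, ← Relation.comp_assoc]
      have h2 : altComp U V (n + 2) = Relation.Comp U (altComp V U (n + 1)) := rfl
      rw [← h2]
      congr 1
      rcases Nat.even_or_odd n with he | ho
      · have h1 : n % 2 = 0 := Nat.even_iff.mp he
        have h3 : (n + 1) % 2 = 1 := by omega
        simp [h1, h3]
      · have h1 : n % 2 = 1 := Nat.odd_iff.mp ho
        have h3 : (n + 1) % 2 = 0 := by omega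
        simp [h1, h3]

/-- If both factors are below a reflexive transitive relation, so is any
alternating composite. -/
lemma altComp_le {α : Type*} {J : α → α → Prop} (hrefl : Reflexive J)
    (htrans : Transitive J) :
    ∀ (m : ℕ) (U V : α → α → Prop), (∀ x y, U x y → J x y) → (∀ x y, V x y → J x y) →
      ∀ x y, altComp U V m x y → J x y := by
  intro m
  induction m using Nat.strong_induction_on with
  | _ m ih =>
    match m with
    | 0 => intro U V _ _ x y h; cases h; exact hrefl x
    | 1 => intro U V hU _ x y h; exact hU x y h
    | n + 2 =>
      intro U V hU hV x y h
      obtain ⟨w, hxw, hwz⟩ := h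
      exact htrans (hU x w hxw) (ih (n + 1) (by omega) V U hV hU w y hwz)

/-- Reversal of alternating composites of symmetric relations. -/
lemma altRev {α : Type*} : ∀ (m : ℕ) (U V : α → α → Prop), Symmetric U → Symmetric V →
    ∀ x y, altComp U V m x y →
      if m % 2 = 0 then altComp V U m y x else altComp U V m y x := by
  intro m
  induction m using Nat.strong_induction_on with
  | _ m ih =>
    match m with
    | 0 => intro U V _ _ x y h; cases h; simp [altComp]
    | 1 => intro U V hU _ x y h; simpa [altComp] using hU h
    | n + 2 =>
      intro U V hU hV x z h
      obtain ⟨w, hxw, hwz⟩ := h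
      have h' := ih (n + 1) (by omega) V U hV hU w z hwz
      have hmod : (n + 2) % 2 = n % 2 := by omega
      rcases Nat.even_or_odd n with he | ho
      · have h1 : n % 2 = 0 := Nat.even_iff.mp he
        have h2 : (n + 1) % 2 = 1 := by omega
        rw [h2] at h'; simp at h'
        rw [hmod, h1]; simp
        rw [altStep n V U, h1]
        simp only [if_pos rfl]
        exact ⟨w, h', hU hxw⟩
      · have h1 : n % 2 = 1 := Nat.odd_iff.mp ho
        have h2 : (n + 1) % 2 = 0 := by omega
        rw [h2] at h'; simp at h'
        rw [hmod, h1]; simp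
        rw [altStep n U V, h1]
        simp only [if_neg (by omega : ¬ (1 : ℕ) % 2 = 0)]
        exact ⟨w, h', hU hxw⟩

/-- Instance form of: in an `n`-permutable Jónsson category,
`R ∧ (S,T)_j ≤ (R ∧ S) ∨ (R ∧ T)` for all `j ≥ 1`. -/
theorem meet_altComp_le_join {A : Type*} (k : ℕ) (hk : 1 ≤ k)
    (R S T : A → A → Prop)
    (hR : Equivalence R) (hS : Equivalence S) (hT : Equivalence T)
    (hbase : R ⊓ Relation.Comp S T ≤ altComp (R ⊓ S) (R ⊓ T) (k + 1))
    (hodd : ∀ j : ℕ, 2 ≤ j → Odd j →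
      R ⊓ Relation.Comp (altComp S T j) T ≤
        altComp (Relation.Comp (R ⊓ altComp S T j) (R ⊓ altComp S T j))
          (Relation.Comp (R ⊓ T) (R ⊓ T)) (k + 1))
    (heven : ∀ j : ℕ, 2 ≤ j → Even j →
      R ⊓ Relation.Comp (altComp S T j) S ≤
        altComp (Relation.Comp (R ⊓ altComp T S j) (R ⊓ altComp S T j))
          (Relation.Comp (R ⊓ S) (R ⊓ S)) (k + 1)) :
    ∀ j : ℕ, 1 ≤ j → R ⊓ altComp S T j ≤ eqvJoin (R ⊓ S) (R ⊓ T) := by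
  set J := eqvJoin (R ⊓ S) (R ⊓ T) with hJ
  have hJeqv : Equivalence J := Relation.EqvGen.is_equivalence _
  have hJrefl : Reflexive J := hJeqv.refl
  have hJtrans : Transitive J := fun _ _ _ h1 h2 => hJeqv.trans h1 h2
  have hJS : ∀ x y, (R ⊓ S) x y → J x y := fun x y h =>
    Relation.EqvGen.rel x y (Or.inl h)
  have hJT : ∀ x y, (R ⊓ T) x y → J x y := fun x y h =>
    Relation.EqvGen.rel x y (Or.inr h)
  intro j
  induction j using Nat.strong_induction_on with
  | _ j ihj =>
    match j with
    | 0 => intro h; omega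
    | 1 => intro _ x y h; exact hJS x y h
    | 2 =>
      intro _ x y h
      exact altComp_le hJrefl hJtrans (k + 1) _ _ hJS hJT x y (hbase x y h)
    | n + 3 =>
      intro _ x z h
      have ihn : ∀ x y, (R ⊓ altComp S T (n + 2)) x y → J x y :=
        fun x y hxy => ihj (n + 2) (by omega) (by omega) x y hxy
      obtain ⟨hRz, hA⟩ := h
      rw [altStep (n + 1) S T] at hA
      rcases Nat.even_or_odd (n + 1) with he | ho
      ·
        have h1 : (n + 1) % 2 = 0 := Nat.even_iff.mp he
        rw [h1] at hA; simp at hA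
        -- hA : Comp (altComp S T (n+2)) T x z ; n+2 is odd
        have hodd' := hodd (n + 2) (by omega) (by
          rcases he with ⟨c, hc⟩
          exact ⟨c, by omega⟩) x z ⟨hRz, hA⟩
        refine altComp_le hJrefl hJtrans (k + 1) _ _ ?_ ?_ x z hodd'
        · rintro a b ⟨c, h1, h2⟩
          exact hJtrans (ihn a c h1) (ihn c b h2)
        · rintro a b ⟨c, h1, h2⟩
          exact hJtrans (hJT a c h1) (hJT c b h2)
      · -- n+1 odd: last factor is S, n+2 even
        have h1 : (n + 1) % 2 = 1 := Nat.odd_iff.mp ho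
        rw [h1] at hA; simp at hA
        have heven' := heven (n + 2) (by omega) (by
          rcases ho with ⟨c, hc⟩
          exact ⟨c + 1, by omega⟩) x z ⟨hRz, hA⟩
        have hTS : ∀ x y, (R ⊓ altComp T S (n + 2)) x y → J x y := by
          rintro a b ⟨hr, hts⟩
          have := altRev (n + 2) T S (fun _ _ h => hT.symm h) (fun _ _ h => hS.symm h)
            a b hts
          have hmod : (n + 2) % 2 = 0 := by omega
          rw [hmod] at this; simp at this
          exact hJeqv.symm (ihn b a ⟨hR.symm hr, this⟩)
        refine altComp_le hJrefl hJtrans (k + 1) _ _ ?_ ?_ x z heven'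
        · rintro a b ⟨c, h1, h2⟩
          exact hJtrans (hTS a c h1) (ihn c b h2)
        · rintro a b ⟨c, h1, h2⟩
          exact hJtrans (hJS a c h1) (hJS c b h2)
end

section
/- Let A be a type, n ≥ 1 a natural number, and R, S, T equivalence relations on A with R ⊓ S ≤ T. Suppose the following Jónsson-type instances hold: (a) R ⊓ (S ∘ T) ≤ (R ⊓ S, R ⊓ T)_{n+1}; (b) R ⊓ (T ∘ S) ≤ (R ⊓ T, R ⊓ S)_{n+1}; (c) R ⊓ (S ∘ T ∘ S) ≤ ((R ⊓ (T ∘ S)) ∘ (R ⊓ (S ∘ T)), (R ⊓ S) ∘ (R ⊓ S))_{n+1}. Then R ⊓ (S ∘ T ∘ S) ≤ T. (Instance form of: every Jónsson category satisfies the trapezoid lemma.) -/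
open Jonsson Relation

/-- Instance form of: every Jónsson category satisfies the trapezoid lemma. -/
theorem jonsson_implies_trapezoid {A : Type*} (n : ℕ) (hn : 1 ≤ n)
    (R S T : A → A → Prop)
    (hR : Equivalence R) (hS : Equivalence S) (hT : Equivalence T)
    (hRS : R ⊓ S ≤ T)
    (ha : R ⊓ Relation.Comp S T ≤ altComp (R ⊓ S) (R ⊓ T) (n + 1))
    (hb : R ⊓ Relation.Comp T S ≤ altComp (R ⊓ T) (R ⊓ S) (n + 1))
    (hc : R ⊓ Relation.Comp S (Relation.Comp T S) ≤
      altComp (Relation.Comp (R ⊓ Relation.Comp T S) (R ⊓ Relation.Comp S T))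
        (Relation.Comp (R ⊓ S) (R ⊓ S)) (n + 1)) :
    R ⊓ Relation.Comp S (Relation.Comp T S) ≤ T := by
  have key : ∀ (m : ℕ) (U V : A → A → Prop),
      (∀ x y, U x y → T x y) → (∀ x y, V x y → T x y) →
      ∀ x y, altComp U V (m + 1) x y → T x y := by
    intro m
    induction m with
    | zero => intro U V hU _ x y h; exact hU x y h
    | succ k ih =>
      intro U V hU hV x y h
      obtain ⟨z, hxz, hzy⟩ := h
      exact hT.trans (hU _ _ hxz) (ih V U hV hU _ _ hzy)
  have hRT : ∀ x y, (R ⊓ T) x y → T x y := fun x y h => h.2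
  have hRS' : ∀ x y, (R ⊓ S) x y → T x y := fun x y h => hRS x y h
  obtain ⟨m, rfl⟩ : ∃ m, n = m + 1 := ⟨n - 1, (Nat.succ_pred_eq_of_pos hn).symm⟩
  have hST : ∀ x y, (R ⊓ Relation.Comp S T) x y → T x y :=
    fun x y h => key _ _ _ hRS' hRT x y (ha x y h)
  have hTS : ∀ x y, (R ⊓ Relation.Comp T S) x y → T x y :=
    fun x y h => key _ _ _ hRT hRS' x y (hb x y h)
  intro x y h
  refine key _ _ _ ?_ ?_ x y (hc x y h)
  · rintro a b ⟨c, h1, h2⟩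
    exact hT.trans (hTS _ _ h1) (hST _ _ h2)
  · rintro a b ⟨c, h1, h2⟩
    exact hT.trans (hRS' _ _ h1) (hRS' _ _ h2)
end

section
/- Let A be a type, n ≥ 1 a natural number, and F, S, T equivalence relations on A such that F ∘ S = S ∘ F and F ∘ (S ⊓ T) = (S ⊓ T) ∘ F. Suppose the Jónsson-type instances (F ∘ S) ⊓ (F ∘ T) ≤ ((F ∘ S) ⊓ F, (F ∘ S) ⊓ T)_{n+1} and (F ∘ S) ⊓ T ≤ (F ⊓ T, S ⊓ T)_{n+1} hold. Then (F ∘ S) ⊓ (F ∘ T) = F ∘ (S ⊓ T). (Instance form of: in a Jónsson category, for a factor relation F one has (F ∘ S) ∧ (F ∘ T) = F ∘ (S ∧ T).) -/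
open Jonsson Relation

lemma altComp_le_s10 {α : Type*} {W : α → α → Prop} (hW : Transitive W) :
    ∀ (m : ℕ) (U V : α → α → Prop), U ≤ W → V ≤ W → altComp U V (m + 1) ≤ W := by
  intro m
  induction m with
  | zero => intro U V hU _ x y h; exact hU x y h
  | succ k ih =>
    intro U V hU hV x z h
    obtain ⟨y, hxy, hyz⟩ := h
    exact hW (hU x y hxy) (ih V U hV hU y z hyz)

/-- Instance form of: in a Jónsson category, for a factor relation `F` one has
`(F ∘ S) ∧ (F ∘ T) = F ∘ (S ∧ T)`. -/
theorem factor_relation_formula {A : Type*} (n : ℕ) (hn : 1 ≤ n)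
    (F S T : A → A → Prop)
    (hF : Equivalence F) (hS : Equivalence S) (hT : Equivalence T)
    (hperm₁ : Relation.Comp F S = Relation.Comp S F)
    (hperm₂ : Relation.Comp F (S ⊓ T) = Relation.Comp (S ⊓ T) F)
    (hjon₁ : Relation.Comp F S ⊓ Relation.Comp F T ≤
      altComp (Relation.Comp F S ⊓ F) (Relation.Comp F S ⊓ T) (n + 1))
    (hjon₂ : Relation.Comp F S ⊓ T ≤ altComp (F ⊓ T) (S ⊓ T) (n + 1)) :
    Relation.Comp F S ⊓ Relation.Comp F T = Relation.Comp F (S ⊓ T) := by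
  set E : A → A → Prop := Relation.Comp F (S ⊓ T) with hE
  -- E is transitive
  have hEtrans : Transitive E := by
    rintro x y z ⟨a, hxa, hay⟩ ⟨b, hyb, hbz⟩
    have hab : Relation.Comp (S ⊓ T) F a b := ⟨y, hay, hyb⟩
    rw [← hperm₂] at hab
    obtain ⟨c, hac, hcb⟩ := hab
    exact ⟨c, hF.trans hxa hac, ⟨hS.trans hcb.1 hbz.1, hT.trans hcb.2 hbz.2⟩⟩
  -- F ≤ E
  have hFE : F ≤ E := fun x y h => ⟨y, h, hS.refl y, hT.refl y⟩
  -- S ⊓ T ≤ E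
  have hSTE : (S ⊓ T : A → A → Prop) ≤ E := fun x y h => ⟨x, hF.refl x, h⟩
  -- F ⊓ T ≤ E
  have hFTE : (F ⊓ T : A → A → Prop) ≤ E := fun x y h => hFE x y h.1
  -- F∘S ⊓ T ≤ E via hjon₂
  have hRT : (Relation.Comp F S ⊓ T : A → A → Prop) ≤ E := fun x y h =>
    altComp_le_s10 hEtrans n (F ⊓ T) (S ⊓ T) hFTE hSTE x y (hjon₂ x y h)
  -- F∘S ⊓ F ≤ E
  have hRF : (Relation.Comp F S ⊓ F : A → A → Prop) ≤ E := fun x y h => hFE x y h.2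
  funext x z
  apply propext
  constructor
  · intro h
    exact altComp_le_s10 hEtrans n _ _ hRF hRT x z (hjon₁ x z h)
  · rintro ⟨y, hxy, hyz⟩
    exact ⟨⟨y, hxy, hyz.1⟩, ⟨y, hxy, hyz.2⟩⟩
end

section
/- Let A be a type, n ≥ 1 a natural number, and let F, F', G, G' be equivalence relations on A such that F ⊓ F' = ⊥, F ∘ F' = ⊤, G ⊓ G' = ⊥ and G ∘ G' = ⊤ (i.e., F, F' and G, G' are pairs of complementary factor relations). Suppose the Jónsson-type instance (F ⊓ G) ⊓ (F' ∘ G') ≤ (F ⊓ G ⊓ F', F ⊓ G ⊓ G')_{n+1} holds, and suppose (F ⊓ G) ∘ F' = (F ∘ F') ⊓ (G ∘ F'). Then (F ⊓ G) ⊓ (F' ∘ G') = ⊥ and (F ⊓ G) ∘ (F' ∘ G') = ⊤, i.e., F ⊓ G and F' ∘ G' are complementary. (Instance form of: in a Barr-exact Jónsson category, factor relations form a Boolean algebra under ∧ and ∘.) -/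
namespace Jonsson

variable {α : Type*}

theorem altComp_le_eq : ∀ (m : ℕ) (U V : α → α → Prop),
    (∀ x y, U x y → x = y) → (∀ x y, V x y → x = y) →
    ∀ x y, altComp U V m x y → x = y
  | 0, _, _, _, _, _, _, h => h
  | 1, _, _, hU, _, x, y, h => hU x y h
  | m + 2, U, V, hU, hV, x, y, h => by
    obtain ⟨z, hxz, hzy⟩ := h
    rw [hU x z hxz]
    exact altComp_le_eq (m + 1) V U hV hU z y hzy

end Jonsson

open Jonsson Relation

/-- Instance form of: in a Barr-exact Jónsson category, factor relations form a
Boolean algebra under `∧` and `∘`.  Here `fun x y => x = y` is the smallest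
(equality) relation and `fun _ _ => True` the largest (total) relation. -/
theorem complementary_factor_relations {A : Type*} (n : ℕ) (hn : 1 ≤ n)
    (F F' G G' : A → A → Prop)
    (hF : Equivalence F) (hF' : Equivalence F')
    (hG : Equivalence G) (hG' : Equivalence G')
    (hFmeet : F ⊓ F' = fun x y : A => x = y)
    (hFcomp : Relation.Comp F F' = fun _ _ : A => True)
    (hGmeet : G ⊓ G' = fun x y : A => x = y)
    (hGcomp : Relation.Comp G G' = fun _ _ : A => True)
    (hjon : (F ⊓ G) ⊓ Relation.Comp F' G' ≤
      altComp (F ⊓ G ⊓ F') (F ⊓ G ⊓ G') (n + 1))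
    (hformula : Relation.Comp (F ⊓ G) F' =
      Relation.Comp F F' ⊓ Relation.Comp G F') :
    (F ⊓ G) ⊓ Relation.Comp F' G' = (fun x y : A => x = y) ∧
      Relation.Comp (F ⊓ G) (Relation.Comp F' G') = (fun _ _ : A => True) := by
  have hFm : ∀ x y : A, F x y → F' x y → x = y := by
    intro x y h1 h2
    have := congrFun (congrFun hFmeet x) y
    exact this.mp ⟨h1, h2⟩
  have hGm : ∀ x y : A, G x y → G' x y → x = y := by
    intro x y h1 h2
    have := congrFun (congrFun hGmeet x) y
    exact this.mp ⟨h1, h2⟩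
  constructor
  · funext x y
    apply propext
    constructor
    · intro h
      have h' := hjon x y h
      exact altComp_le_eq (n + 1) (F ⊓ G ⊓ F') (F ⊓ G ⊓ G')
        (fun a b hab => hFm a b hab.1.1 hab.2)
        (fun a b hab => hGm a b hab.1.2 hab.2) x y h'
    · rintro rfl
      exact ⟨⟨hF.refl x, hG.refl x⟩, ⟨x, hF'.refl x, hG'.refl x⟩⟩
  · funext x z
    apply propext
    simp only [iff_true]
    obtain ⟨u, hGxu, hG'uz⟩ : Relation.Comp G G' x z := by
      rw [hGcomp]; trivial
    have hGF' : (Relation.Comp F F' ⊓ Relation.Comp G F') x u := by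
      constructor
      · rw [hFcomp]; trivial
      · exact ⟨u, hGxu, hF'.refl u⟩
    rw [← hformula] at hGF'
    obtain ⟨y, hFGxy, hF'yu⟩ := hGF'
    exact ⟨y, hFGxy, u, hF'yu, hG'uz⟩
end

section
/- Let A be a type, R an equivalence relation on A, and S, T reflexive binary relations on A. Let a, b, c ∈ A with R a c, S a b and T b c. Define D := {(x, y, z) ∈ A × A × A | R x z ∧ ∃ v, R y v ∧ S x v ∧ T v z}, and for i = 1, 2, 3 let D_i be the equivalence relation on D identifying triples with equal i-th components. Then (a,a,a) ∈ D, (a,b,c) ∈ D, (c,a,c) ∈ D, and the pair ((a,a,a), (c,a,c)) belongs to D₂ ⊓ (D₁ ∘ D₃). (Key construction in the proof of the paper's main theorem characterising Jónsson categories.) -/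
open Jonsson Relation

/-- The defining predicate of the ternary relation `D` from the proof of the
main theorem: `(x, y, z) ∈ D` iff `R x z` and there is `v` with `R y v`,
`S x v` and `T v z`. -/
def tripleMem {A : Type*} (R S T : A → A → Prop) (p : A × A × A) : Prop :=
  R p.1 p.2.2 ∧ ∃ v, R p.2.1 v ∧ S p.1 v ∧ T v p.2.2

/-- The subtype `D ⊆ A × A × A` from the proof of the main theorem. -/
def tripleD {A : Type*} (R S T : A → A → Prop) : Type _ :=
  { p : A × A × A // tripleMem R S T p }

/-- Kernel relation of the first projection restricted to `D`. -/
def D₁ {A : Type*} {R S T : A → A → Prop} :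
    tripleD R S T → tripleD R S T → Prop :=
  fun p q => p.val.1 = q.val.1

/-- Kernel relation of the second projection restricted to `D`. -/
def D₂ {A : Type*} {R S T : A → A → Prop} :
    tripleD R S T → tripleD R S T → Prop :=
  fun p q => p.val.2.1 = q.val.2.1

/-- Kernel relation of the third projection restricted to `D`. -/
def D₃ {A : Type*} {R S T : A → A → Prop} :
    tripleD R S T → tripleD R S T → Prop :=
  fun p q => p.val.2.2 = q.val.2.2

/-- Key construction in the proof of the main theorem: the triples
`(a,a,a)`, `(a,b,c)`, `(c,a,c)` all lie in `D`, and
`((a,a,a), (c,a,c)) ∈ D₂ ⊓ (D₁ ∘ D₃)`. -/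
theorem key_construction {A : Type*} (R S T : A → A → Prop)
    (hR : Equivalence R) (hS : ∀ x, S x x) (hT : ∀ x, T x x)
    (a b c : A) (hac : R a c) (hab : S a b) (hbc : T b c) :
    ∃ (h₁ : tripleMem R S T (a, a, a)) (_ : tripleMem R S T (a, b, c))
      (h₃ : tripleMem R S T (c, a, c)),
      (D₂ ⊓ Relation.Comp D₁ D₃)
        (⟨(a, a, a), h₁⟩ : tripleD R S T) (⟨(c, a, c), h₃⟩ : tripleD R S T) := by
  have h₁ : tripleMem R S T (a, a, a) := ⟨hR.refl a, a, hR.refl a, hS a, hT a⟩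
  have h₂ : tripleMem R S T (a, b, c) := ⟨hac, b, hR.refl b, hab, hbc⟩
  have h₃ : tripleMem R S T (c, a, c) := ⟨hR.refl c, c, hac, hS c, hT c⟩
  exact ⟨h₁, h₂, h₃, rfl, ⟨(a, b, c), h₂⟩, rfl, rfl⟩
end

section
/- Let A be a type, n ≥ 2 a natural number, R an equivalence relation on A, and S, T reflexive binary relations on A. Define D := {(x, y, z) ∈ A × A × A | R x z ∧ ∃ v, R y v ∧ S x v ∧ T v z}, and for i = 1, 2, 3 let D_i be the equivalence relation on D identifying triples with equal i-th components. Suppose that D₂ ⊓ (D₁ ∘ D₃) ≤ (D₂ ⊓ D₁, D₂ ⊓ D₃)_{n+1} as relations on D. Then R ⊓ (S ∘ T) ≤ ((R ⊓ Sᵒᵖ) ∘ (R ⊓ S), (R ⊓ T) ∘ (R ⊓ Tᵒᵖ))_{n+1} as relations on A. (Instance form of the hard implication of the paper's main theorem: in a Jónsson category of order n, the Jónsson inequality extends from equivalence relations to an equivalence relation R together with reflexive relations S, T.) -/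
open Jonsson Relation

section Aux

variable {A : Type*} {R S T : A → A → Prop}

/-- A witness for membership of a triple in `D`. -/
def JWit (t : tripleD R S T) (v : A) : Prop :=
  R t.val.2.1 v ∧ S t.val.1 v ∧ T v t.val.2.2

/-- The invariant carried along the chain of triples: the second component is
`x` and the first component is `R`-related to `x`. -/
def JInv (x : A) (t : tripleD R S T) : Prop :=
  t.val.2.1 = x ∧ R x t.val.1

lemma jwit_exists (t : tripleD R S T) : ∃ v, JWit t v := t.property.2

lemma stepS (hR : Equivalence R) {x : A} {p q : tripleD R S T}
    (hpq : (D₂ ⊓ D₁ : tripleD R S T → tripleD R S T → Prop) p q)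
    (hp : JInv x p) {v v' : A} (hv : JWit p v) (hv' : JWit q v') :
    Relation.Comp (R ⊓ fun a b => S b a) (R ⊓ S) v v' ∧ JInv x q := by
  obtain ⟨h2, h1⟩ := hpq
  obtain ⟨hx2, hx1⟩ := hp
  have hxv : R x v := hx2 ▸ hv.1
  have hq2 : q.val.2.1 = x := h2 ▸ hx2
  have hxv' : R x v' := hq2 ▸ hv'.1
  refine ⟨⟨p.val.1, ⟨hR.trans (hR.symm hxv) hx1, hv.2.1⟩,
    ⟨hR.trans (hR.symm hx1) hxv', h1 ▸ hv'.2.1⟩⟩, hq2, h1 ▸ hx1⟩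

lemma stepT (hR : Equivalence R) {x : A} {p q : tripleD R S T}
    (hpq : (D₂ ⊓ D₃ : tripleD R S T → tripleD R S T → Prop) p q)
    (hp : JInv x p) {v v' : A} (hv : JWit p v) (hv' : JWit q v') :
    Relation.Comp (R ⊓ T) (R ⊓ fun a b => T b a) v v' ∧ JInv x q := by
  obtain ⟨h2, h3⟩ := hpq
  obtain ⟨hx2, hx1⟩ := hp
  have hxv : R x v := hx2 ▸ hv.1
  have hq2 : q.val.2.1 = x := h2 ▸ hx2
  have hxv' : R x v' := hq2 ▸ hv'.1
  have hxc : R x p.val.2.2 := hR.trans hx1 p.property.1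
  have hxq1 : R x q.val.1 := hR.trans (h3 ▸ hxc) (hR.symm q.property.1)
  refine ⟨⟨p.val.2.2, ⟨hR.trans (hR.symm hxv) hxc, hv.2.2⟩,
    ⟨hR.trans (hR.symm hxc) hxv', h3 ▸ hv'.2.2⟩⟩, hq2, hxq1⟩

lemma lift (hR : Equivalence R) {x : A} :
    ∀ (m : ℕ) (b : Bool) (p q : tripleD R S T),
      altComp (cond b (D₂ ⊓ D₁) (D₂ ⊓ D₃)) (cond b (D₂ ⊓ D₃) (D₂ ⊓ D₁)) (m + 1) p q →
      JInv x p → ∀ v v', JWit p v → JWit q v' →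
      altComp (cond b (Relation.Comp (R ⊓ fun a b => S b a) (R ⊓ S))
          (Relation.Comp (R ⊓ T) (R ⊓ fun a b => T b a)))
        (cond b (Relation.Comp (R ⊓ T) (R ⊓ fun a b => T b a))
          (Relation.Comp (R ⊓ fun a b => S b a) (R ⊓ S))) (m + 1) v v' ∧ JInv x q := by
  intro m
  induction m with
  | zero =>
    intro b p q hchain hp v v' hv hv'
    cases b with
    | true => exact stepS hR hchain hp hv hv'
    | false => exact stepT hR hchain hp hv hv'
  | succ m ih =>
    intro b p q hchain hp v v' hv hv'
    obtain ⟨r, hpr, hrq⟩ := hchain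
    obtain ⟨vr, hvr⟩ := jwit_exists r
    cases b with
    | true =>
      obtain ⟨hstep, hr⟩ := stepS hR hpr hp hv hvr
      obtain ⟨hchain', hq⟩ := ih false r q hrq hr vr v' hvr hv'
      exact ⟨⟨vr, hstep, hchain'⟩, hq⟩
    | false =>
      obtain ⟨hstep, hr⟩ := stepT hR hpr hp hv hvr
      obtain ⟨hchain', hq⟩ := ih true r q hrq hr vr v' hvr hv'
      exact ⟨⟨vr, hstep, hchain'⟩, hq⟩

end Aux

/-- Instance form of the hard implication of the paper's main theorem: if the
Jónsson inequality holds for the kernel relations `D₁`, `D₂`, `D₃` on `D`, then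
`R ⊓ (S ∘ T) ≤ ((R ⊓ Sᵒᵖ) ∘ (R ⊓ S), (R ⊓ T) ∘ (R ⊓ Tᵒᵖ))_{n+1}`. -/
theorem main_theorem_hard_implication {A : Type*} (n : ℕ) (hn : 2 ≤ n)
    (R S T : A → A → Prop)
    (hR : Equivalence R) (hS : ∀ x, S x x) (hT : ∀ x, T x x)
    (hD : (D₂ ⊓ Relation.Comp D₁ D₃ :
        tripleD R S T → tripleD R S T → Prop) ≤
      altComp (D₂ ⊓ D₁) (D₂ ⊓ D₃) (n + 1)) :
    R ⊓ Relation.Comp S T ≤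
      altComp (Relation.Comp (R ⊓ fun x y => S y x) (R ⊓ S))
        (Relation.Comp (R ⊓ T) (R ⊓ fun x y => T y x)) (n + 1) := by
  intro x z hx
  obtain ⟨hRxz, y, hsy, htz⟩ := hx
  have hp : tripleMem R S T (x, x, x) := ⟨hR.refl x, x, hR.refl x, hS x, hT x⟩
  have hq : tripleMem R S T (z, x, z) := ⟨hR.refl z, z, hRxz, hS z, hT z⟩
  have hr : tripleMem R S T (x, y, z) := ⟨hRxz, y, hR.refl y, hsy, htz⟩
  have hchain := hD (⟨(x, x, x), hp⟩ : tripleD R S T) (⟨(z, x, z), hq⟩ : tripleD R S T)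
    ⟨rfl, ⟨(x, y, z), hr⟩, rfl, rfl⟩
  exact (lift hR n true ⟨(x, x, x), hp⟩ ⟨(z, x, z), hq⟩ hchain ⟨rfl, hR.refl x⟩
    x z ⟨hR.refl x, hS x, hT x⟩ ⟨hRxz, hS z, hT z⟩).1
end
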